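/- Let σ ∈ (1/2, 1). Then for every ξ with 0 < ξ ≤ 1, (1/2)·((1+ξ)^{2σ} + (1−ξ)^{2σ}) − 1 ≤ (2^{2σ−1} − 1) · ξ^{2σ}. Equivalently, the even symmetrization g(ξ) = (p₁(ξ) + p₁(−ξ))/2 satisfies g(ξ) ≤ (2^{2σ−1} − 1)|ξ|^{2σ} for 0 < |ξ| ≤ 1. -/

import Mathlib

open Real

/-- The symbol `p₁(ξ) = |ξ+1|^{2σ} − 1 − 2σξ`. -/
noncomputable def pOne (σ : ℝ) (ξ : ℝ) : ℝ := |ξ + 1| ^ (2*σ) - 1 - 2*σ*ξ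

/-!
Put `s = 2σ ∈ [1, 2]` and `t = 1/ξ ≥ 1`. After multiplying by `t^s` the claim becomes
`(t+1)^s + (t-1)^s - 2t^s ≤ 2^s - 2`, with equality at `t = 1`. The left side is antitone in `t`,
since its derivative is `s((t+1)^{s-1} + (t-1)^{s-1} - 2t^{s-1}) ≤ 0` by concavity of `x ↦ x^{s-1}`.
-/

open Set

lemma rpow_add_one_add_rpow_sub_one_le {p t : ℝ} (hp₀ : 0 ≤ p) (hp₁ : p ≤ 1) (ht : 1 ≤ t) :
    (t + 1) ^ p + (t - 1) ^ p ≤ 2 * t ^ p := by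
  have h := (concaveOn_rpow hp₀ hp₁).2 (x := t + 1) (y := t - 1)
    (by simp only [mem_Ici]; linarith) (by simp only [mem_Ici]; linarith)
    (by norm_num : (0 : ℝ) ≤ 1 / 2) (by norm_num : (0 : ℝ) ≤ 1 / 2) (by norm_num)
  simp only [smul_eq_mul] at h
  have hmid : 1 / 2 * (t + 1) + 1 / 2 * (t - 1) = t := by ring
  rw [hmid] at h
  linarith

lemma antitoneOn_rpow_add_one_add_rpow_sub_one_sub {s : ℝ} (hs₁ : 1 ≤ s) (hs₂ : s ≤ 2) :
    AntitoneOn (fun t : ℝ => (t + 1) ^ s + (t - 1) ^ s - 2 * t ^ s) (Ici 1) := by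
  have hs₀ : 0 ≤ s := by linarith
  refine antitoneOn_of_hasDerivWithinAt_nonpos (convex_Ici 1)
    (f' := fun t => s * ((t + 1) ^ (s - 1) + (t - 1) ^ (s - 1) - 2 * t ^ (s - 1))) ?_ ?_ ?_
  · refine ContinuousOn.sub (ContinuousOn.add ?_ ?_) (continuousOn_const.mul ?_) <;>
      exact ContinuousOn.rpow_const (by fun_prop) fun _ _ => Or.inr hs₀
  · rw [interior_Ici]
    intro t (ht : 1 < t)
    have hplus := ((hasDerivAt_id t).add_const 1).rpow_const (p := s) (Or.inr hs₁)
    have hminus := ((hasDerivAt_id t).sub_const 1).rpow_const (p := s) (Or.inr hs₁)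
    have hpow := (hasDerivAt_id t).rpow_const (p := s) (Or.inr hs₁)
    exact (((hplus.add hminus).sub (hpow.const_mul 2)).congr_deriv
      (by simp only [id]; ring)).hasDerivWithinAt
  · rw [interior_Ici]
    intro t (ht : 1 < t)
    have := rpow_add_one_add_rpow_sub_one_le (p := s - 1) (by linarith) (by linarith) ht.le
    exact mul_nonpos_of_nonneg_of_nonpos hs₀ (by linarith)

lemma one_add_rpow_add_one_sub_rpow_sub_two_le {s ξ : ℝ} (hs₁ : 1 ≤ s) (hs₂ : s ≤ 2)
    (hξ₀ : 0 < ξ) (hξ₁ : ξ ≤ 1) :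
    (1 + ξ) ^ s + (1 - ξ) ^ s - 2 ≤ (2 ^ s - 2) * ξ ^ s := by
  have ht : 1 ≤ ξ⁻¹ := one_le_inv₀ hξ₀ |>.mpr hξ₁
  have hanti := antitoneOn_rpow_add_one_add_rpow_sub_one_sub hs₁ hs₂
    (mem_Ici.mpr le_rfl) (mem_Ici.mpr ht) ht
  simp only [one_add_one_eq_two, sub_self, one_rpow, zero_rpow (by linarith : s ≠ 0)] at hanti
  have hscale (a : ℝ) (ha : 0 ≤ a) : ξ ^ s * a ^ s = (ξ * a) ^ s := (mul_rpow hξ₀.le ha).symm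
  calc (1 + ξ) ^ s + (1 - ξ) ^ s - 2
      = ξ ^ s * ((ξ⁻¹ + 1) ^ s + (ξ⁻¹ - 1) ^ s - 2 * ξ⁻¹ ^ s) := by
        rw [mul_sub, mul_add, mul_left_comm, hscale _ (by linarith), hscale _ (by linarith),
          hscale _ (by positivity), mul_add, mul_sub, mul_inv_cancel₀ hξ₀.ne', one_rpow, mul_one,
          mul_one, add_comm 1 ξ]
    _ ≤ ξ ^ s * (2 ^ s + 0 - 2 * 1) := by gcongr
    _ = (2 ^ s - 2) * ξ ^ s := by ring

lemma pOne_add_pOne_neg {σ ξ : ℝ} (hξ : |ξ| ≤ 1) :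
    pOne σ ξ + pOne σ (-ξ) = (1 + |ξ|) ^ (2 * σ) + (1 - |ξ|) ^ (2 * σ) - 2 := by
  have h := abs_le.mp hξ
  rw [pOne, pOne, abs_of_nonneg (by linarith : 0 ≤ ξ + 1), abs_of_nonneg (by linarith : 0 ≤ -ξ + 1)]
  rcases abs_cases ξ with ⟨hξ_eq, -⟩ | ⟨hξ_eq, -⟩
  · rw [hξ_eq]; ring_nf
  · rw [hξ_eq]; ring_nf

/-- For `0 < ξ ≤ 1`, `(1/2)((1+ξ)^{2σ} + (1−ξ)^{2σ}) − 1 ≤ (2^{2σ−1} − 1)ξ^{2σ}`;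
equivalently, the even part `g(ξ) = (p₁(ξ) + p₁(−ξ))/2` satisfies
`g(ξ) ≤ (2^{2σ−1} − 1)|ξ|^{2σ}` for `0 < |ξ| ≤ 1`. -/
theorem pOne_even_part_low (σ : ℝ) (hσ : σ ∈ Set.Ioo (1/2 : ℝ) 1) :
    (∀ ξ : ℝ, 0 < ξ → ξ ≤ 1 →
      (1/2) * ((1 + ξ) ^ (2*σ) + (1 - ξ) ^ (2*σ)) - 1 ≤ ((2 : ℝ) ^ (2*σ - 1) - 1) * ξ ^ (2*σ)) ∧
    (∀ ξ : ℝ, 0 < |ξ| → |ξ| ≤ 1 →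
      (pOne σ ξ + pOne σ (-ξ)) / 2 ≤ ((2 : ℝ) ^ (2*σ - 1) - 1) * |ξ| ^ (2*σ)) := by
  obtain ⟨hσ₁, hσ₂⟩ := hσ
  have hhalf : (2 : ℝ) ^ (2 * σ - 1) = 2 ^ (2 * σ) / 2 := by
    rw [rpow_sub two_pos, rpow_one]
  have hpos : ∀ ξ : ℝ, 0 < ξ → ξ ≤ 1 →
      (1/2) * ((1 + ξ) ^ (2*σ) + (1 - ξ) ^ (2*σ)) - 1 ≤ ((2 : ℝ) ^ (2*σ - 1) - 1) * ξ ^ (2*σ) := by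
    intro ξ hξ₀ hξ₁
    have := one_add_rpow_add_one_sub_rpow_sub_two_le (s := 2 * σ) (by linarith) (by linarith)
      hξ₀ hξ₁
    rw [hhalf]
    linarith
  refine ⟨hpos, fun ξ hξ₀ hξ₁ => ?_⟩
  rw [pOne_add_pOne_neg hξ₁]
  linarith [hpos |ξ| hξ₀ hξ₁]
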